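/- Let G be a bipartite graph, M a maximum matching in G, and 𝓞, 𝓤 the sets of odd and unreachable vertices with respect to M. Then no maximum matching of G contains an edge with one endpoint in 𝓞 and the other endpoint in 𝓞 ∪ 𝓤. -/

import Mathlib

open SimpleGraph

variable {V : Type*}

/-- `M` is a matching in the graph `G`: a set of edges of `G` no two of which
share a vertex. -/
def IsMatchingIn (G : SimpleGraph V) (M : Set (Sym2 V)) : Prop :=
  M ⊆ G.edgeSet ∧ ∀ e ∈ M, ∀ f ∈ M, e ≠ f → ∀ v : V, v ∈ e → v ∉ f

/-- A vertex `v` is matched (covered) by the matching `M`. -/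
def IsMatchedBy (M : Set (Sym2 V)) (v : V) : Prop :=
  ∃ e ∈ M, v ∈ e

/-- The list of edges of a path given as a list of vertices. -/
def pathEdges (p : List V) : List (Sym2 V) :=
  (p.zip p.tail).map fun q => s(q.1, q.2)

/-- `p` is an alternating path from `u` to `v` in `G` with respect to the matching `M`:
its consecutive vertices are adjacent in `G`, it repeats no vertex, and its edges
alternate between edges in `M` and edges not in `M`. -/
def IsAltPath (G : SimpleGraph V) (M : Set (Sym2 V)) (u v : V) (p : List V) : Prop :=
  p.Chain' G.Adj ∧ p.Nodup ∧
    (pathEdges p).Chain' (fun e f => (e ∈ M ↔ f ∉ M)) ∧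
    p.head? = some u ∧ p.getLast? = some v

/-- `v` is even with respect to `M`: there is an even-length alternating path from
an `M`-unmatched vertex to `v`. -/
def EvenVtx (G : SimpleGraph V) (M : Set (Sym2 V)) (v : V) : Prop :=
  ∃ u p, ¬ IsMatchedBy M u ∧ IsAltPath G M u v p ∧ Even (pathEdges p).length

/-- `v` is odd with respect to `M`: there is an odd-length alternating path from
an `M`-unmatched vertex to `v`. -/
def OddVtx (G : SimpleGraph V) (M : Set (Sym2 V)) (v : V) : Prop :=
  ∃ u p, ¬ IsMatchedBy M u ∧ IsAltPath G M u v p ∧ Odd (pathEdges p).length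

/-- `v` is unreachable with respect to `M`: there is no alternating path from any
`M`-unmatched vertex to `v`. -/
def UnreachableVtx (G : SimpleGraph V) (M : Set (Sym2 V)) (v : V) : Prop :=
  ¬ ∃ u p, ¬ IsMatchedBy M u ∧ IsAltPath G M u v p

/-- `M` is a maximum (cardinality) matching in `G`. -/
def IsMaxMatching (G : SimpleGraph V) (M : Set (Sym2 V)) : Prop :=
  IsMatchingIn G M ∧ ∀ N, IsMatchingIn G N → N.ncard ≤ M.ncard

/-- `G` is bipartite with the two sides given by `side`. -/
def IsBipartiteWith (G : SimpleGraph V) (side : V → Bool) : Prop :=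
  ∀ u v, G.Adj u v → side u ≠ side v

/-! In a bipartite graph, an alternating walk from an unmatched vertex on side `b` uses a
matching edge exactly when it leaves a vertex not on side `b` (`AltStep`). So even and odd
vertices are reachability sets of a relation, and an odd walk to `v`, read backwards, continues
an even walk to `v`; together they would give an augmenting path.

Fix `b := side w`. The odd vertices together with the unreachable vertices on side `b` form a
vertex cover `C` of `G` (a neighbour of an even vertex is odd, and an edge between unreachable
vertices has one end on each side). As `M` has no augmenting path, every vertex of `C` is
`M`-matched and no `M`-edge has both ends in `C`, so `|C| ≤ |M|`. A matching with an edge `vw`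
inside `C` has fewer than `|C|` edges, since choosing an end in `C \ {w}` of each edge is
injective. Hence `|N| < |M|`, contradicting maximality of `N`. -/

theorem Relation.ReflTransGen.exists_nodup_isChain {α : Type*} {r : α → α → Prop} {a b : α}
    (h : Relation.ReflTransGen r a b) :
    ∃ l, (a :: l).IsChain r ∧ (a :: l).Nodup ∧ (a :: l).getLast? = some b := by
  induction h using Relation.ReflTransGen.head_induction_on with
  | refl => exact ⟨[], List.isChain_singleton _, List.nodup_singleton _, rfl⟩
  | @head a c hac _ ih =>
    obtain ⟨l, hchain, hnodup, hlast⟩ := ih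
    by_cases ha : a ∈ c :: l
    · obtain ⟨s, t, hst⟩ := List.mem_iff_append.1 ha
      rw [hst] at hchain hnodup hlast
      exact ⟨t, hchain.right_of_append, hnodup.sublist (List.sublist_append_right _ _),
        by rwa [List.getLast?_append_of_ne_nil _ (List.cons_ne_nil _ _)] at hlast⟩
    · exact ⟨c :: l, hchain.cons_cons hac, List.nodup_cons.2 ⟨ha, hnodup⟩,
        by rwa [List.getLast?_cons_cons]⟩

section Matching

variable {G : SimpleGraph V} {M : Set (Sym2 V)}

theorem IsMatchingIn.eq_of_mem (hM : IsMatchingIn G M) {e f : Sym2 V} {x : V}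
    (he : e ∈ M) (hf : f ∈ M) (hxe : x ∈ e) (hxf : x ∈ f) : e = f := by
  by_contra hne
  exact hM.2 e he f hf hne x hxe hxf

theorem IsMatchingIn.subset (hM : IsMatchingIn G M) {M' : Set (Sym2 V)} (h : M' ⊆ M) :
    IsMatchingIn G M' :=
  ⟨h.trans hM.1, fun e he f hf => hM.2 e (h he) f (h hf)⟩

theorem IsMatchingIn.insert_of_not_isMatchedBy (hM : IsMatchingIn G M) {x y : V} (hxy : G.Adj x y)
    (hx : ¬ IsMatchedBy M x) (hy : ¬ IsMatchedBy M y) : IsMatchingIn G (insert s(x, y) M) := by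
  have hfree : ∀ e ∈ M, ∀ z ∈ s(x, y), z ∉ e := by
    intro e he z hz hze
    rcases Sym2.mem_iff.mp hz with rfl | rfl
    exacts [hx ⟨e, he, hze⟩, hy ⟨e, he, hze⟩]
  refine ⟨Set.insert_subset hxy hM.1, ?_⟩
  rintro e (rfl | he) f (rfl | hf) hne z hze hzf
  · exact hne rfl
  · exact hfree f hf z hze hzf
  · exact hfree e he z hzf hze
  · exact hM.2 e he f hf hne z hze hzf

theorem isMatchedBy_insert {e : Sym2 V} {x : V} :
    IsMatchedBy (insert e M) x ↔ x ∈ e ∨ IsMatchedBy M x := by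
  simp [IsMatchedBy]

theorem IsMatchingIn.isMatchedBy_sdiff_singleton (hM : IsMatchingIn G M) {e : Sym2 V}
    (he : e ∈ M) {x : V} : IsMatchedBy (M \ {e}) x ↔ IsMatchedBy M x ∧ x ∉ e := by
  constructor
  · rintro ⟨f, ⟨hf, hfe⟩, hxf⟩
    exact ⟨⟨f, hf, hxf⟩, fun hxe => hfe (hM.eq_of_mem hf he hxf hxe)⟩
  · rintro ⟨⟨f, hf, hxf⟩, hxe⟩
    exact ⟨f, ⟨hf, by rintro rfl; exact hxe hxf⟩, hxf⟩

theorem IsMatchingIn.exchange [Finite V] (hM : IsMatchingIn G M) {x y z : V} (hxy : G.Adj x y)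
    (hx : ¬ IsMatchedBy M x) (hyz : s(y, z) ∈ M) :
    IsMatchingIn G (insert s(x, y) (M \ {s(y, z)})) ∧
      (insert s(x, y) (M \ {s(y, z)})).ncard = M.ncard := by
  have hx' : ¬ IsMatchedBy (M \ {s(y, z)}) x :=
    fun h => hx ((hM.isMatchedBy_sdiff_singleton hyz).1 h).1
  have hy' : ¬ IsMatchedBy (M \ {s(y, z)}) y :=
    fun h => ((hM.isMatchedBy_sdiff_singleton hyz).1 h).2 (Sym2.mem_mk_left _ _)
  refine ⟨(hM.subset Set.sdiff_subset).insert_of_not_isMatchedBy hxy hx' hy', ?_⟩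
  rw [Set.ncard_insert_of_notMem fun h => hx' ⟨_, h, Sym2.mem_mk_left _ _⟩,
    Set.ncard_sdiff_singleton_add_one hyz]

theorem mem_exchange_iff {x y z p q : V} (hp : p ≠ x ∧ p ≠ y) (hq : q ≠ x ∧ q ≠ y) :
    s(p, q) ∈ insert s(x, y) (M \ {s(y, z)}) ↔ s(p, q) ∈ M := by
  simp [hp.1, hp.2, hq.1, hq.2]

theorem IsMatchingIn.isMatchedBy_exchange_iff (hM : IsMatchingIn G M) {x y z p : V}
    (hyz : s(y, z) ∈ M) (hp : p ≠ x ∧ p ≠ y) :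
    IsMatchedBy (insert s(x, y) (M \ {s(y, z)})) p ↔ IsMatchedBy M p ∧ p ≠ z := by
  rw [isMatchedBy_insert, hM.isMatchedBy_sdiff_singleton hyz]
  simp [Sym2.mem_iff, hp.1, hp.2]

theorem ncard_le_ncard_of_forall_isMatchedBy [Finite V] {S : Set V}
    (hS : ∀ x ∈ S, IsMatchedBy M x) (hedge : ∀ x y, s(x, y) ∈ M → x ∈ S → y ∉ S) :
    S.ncard ≤ M.ncard := by
  have hpartner : ∀ x ∈ S, ∃ y, s(x, y) ∈ M := fun x hx => by
    obtain ⟨e, he, hxe⟩ := hS x hx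
    obtain ⟨y, rfl⟩ := Sym2.mem_iff_exists.1 hxe
    exact ⟨y, he⟩
  choose! partner hpartner using hpartner
  refine Set.ncard_le_ncard_of_injOn (fun x => s(x, partner x)) hpartner
    fun x hx y hy hxy => ?_
  rcases Sym2.eq_iff.1 hxy with ⟨hxy, -⟩ | ⟨hxy, hyx⟩
  · exact hxy
  · exact absurd hy (hedge x y (hyx ▸ hpartner x hx) hx)

theorem IsMatchingIn.ncard_le_ncard_of_forall_exists_mem [Finite V] (hM : IsMatchingIn G M)
    {S : Set V} (h : ∀ e ∈ M, ∃ x ∈ e, x ∈ S) : M.ncard ≤ S.ncard := by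
  choose f hfe hfS using h
  rw [← Nat.card_coe_set_eq, ← Nat.card_coe_set_eq]
  refine Nat.card_le_card_of_injective (fun e : M => ⟨f e e.2, hfS e e.2⟩) ?_
  rintro ⟨e, he⟩ ⟨e', he'⟩ h
  have h : f e he = f e' he' := congrArg Subtype.val h
  exact Subtype.ext (hM.eq_of_mem he he' (hfe e he) (h ▸ hfe e' he'))

theorem IsMatchingIn.ncard_lt_ncard_of_cover [Finite V] (hM : IsMatchingIn G M) {C : Set V}
    (hC : ∀ x y, G.Adj x y → x ∈ C ∨ y ∈ C) {v w : V} (hvw : s(v, w) ∈ M)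
    (hv : v ∈ C) (hw : w ∈ C) : M.ncard < C.ncard := by
  refine (hM.ncard_le_ncard_of_forall_exists_mem (S := C \ {w}) ?_).trans_lt
    (Set.ncard_sdiff_singleton_lt_of_mem hw)
  intro e he
  induction e using Sym2.ind with | _ x y => ?_
  by_cases hwe : w ∈ s(x, y)
  · rw [hM.eq_of_mem he hvw hwe (Sym2.mem_mk_right _ _)]
    exact ⟨v, Sym2.mem_mk_left _ _, hv, (hM.1 hvw).ne⟩
  · rcases hC x y (hM.1 he) with hx | hy
    · exact ⟨x, Sym2.mem_mk_left _ _, hx, fun h => hwe (h ▸ Sym2.mem_mk_left _ _)⟩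
    · exact ⟨y, Sym2.mem_mk_right _ _, hy, fun h => hwe (h ▸ Sym2.mem_mk_right _ _)⟩

end Matching

section Alternating

variable {G : SimpleGraph V} {M : Set (Sym2 V)} {side : V → Bool}

/-- A step `x → y` of an alternating walk that starts at an unmatched vertex on side `b`: in a
bipartite graph its edge must be a matching edge exactly when `x` lies on the other side. -/
def AltStep (G : SimpleGraph V) (M : Set (Sym2 V)) (side : V → Bool) (b : Bool) (x y : V) :
    Prop :=
  G.Adj x y ∧ (s(x, y) ∈ M ↔ side x ≠ b)

def AltReachable (G : SimpleGraph V) (M : Set (Sym2 V)) (side : V → Bool) (b : Bool) (v : V) :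
    Prop :=
  ∃ u, ¬ IsMatchedBy M u ∧ side u = b ∧ Relation.ReflTransGen (AltStep G M side b) u v

theorem IsBipartiteWith.side_eq_not (hbip : IsBipartiteWith G side) {x y : V} (h : G.Adj x y) :
    side y = !side x :=
  Bool.eq_not_iff.2 (hbip x y h).symm

theorem altStep_not (hbip : IsBipartiteWith G side) (b : Bool) :
    AltStep G M side (!b) = Function.swap (AltStep G M side b) := by
  ext x y
  simp only [AltStep, Function.swap, G.adj_comm y x, Sym2.eq_swap (a := y)]
  refine and_congr_right fun hxy => ?_
  have := hbip x y hxy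
  revert this
  cases side x <;> cases side y <;> cases b <;> simp

theorem pathEdges_cons_cons (a b : V) (l : List V) :
    pathEdges (a :: b :: l) = s(a, b) :: pathEdges (b :: l) := by
  simp [pathEdges]

theorem length_pathEdges_cons (a : V) (l : List V) : (pathEdges (a :: l)).length = l.length := by
  simp [pathEdges]

theorem IsBipartiteWith.side_eq_iff_even (hbip : IsBipartiteWith G side) {a v : V} {l : List V}
    (hl : (a :: l).IsChain G.Adj) (hv : (a :: l).getLast? = some v) :
    side v = side a ↔ Even l.length := by
  induction l generalizing a with
  | nil => simp_all
  | cons c l ih =>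
    rw [List.isChain_cons_cons] at hl
    rw [List.getLast?_cons_cons] at hv
    have hac := hbip a c hl.1
    rw [List.length_cons, Nat.even_add_one, ← ih hl.2 hv]
    revert hac
    cases side a <;> cases side c <;> cases side v <;> simp

theorem isChain_altStep_cons_iff (hbip : IsBipartiteWith G side) {b : Bool} {a : V}
    {l : List V} :
    (a :: l).IsChain (AltStep G M side b) ↔
      (a :: l).IsChain G.Adj ∧ (pathEdges (a :: l)).IsChain (fun e f => (e ∈ M ↔ f ∉ M)) ∧
        ∀ c ∈ l.head?, (s(a, c) ∈ M ↔ side a ≠ b) := by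
  induction l generalizing a with
  | nil => simp [pathEdges]
  | cons c l ih =>
    cases l with
    | nil => simp [pathEdges, AltStep]
    | cons d l =>
      rw [List.isChain_cons_cons (R := AltStep G M side b), ih,
        List.isChain_cons_cons (R := G.Adj) (a := a), pathEdges_cons_cons a c,
        List.isChain_cons (x := s(a, c)), pathEdges_cons_cons c d]
      have key : G.Adj a c → (s(a, c) ∈ M ↔ side a ≠ b) →
          ((s(c, d) ∈ M ↔ side c ≠ b) ↔ (s(a, c) ∈ M ↔ s(c, d) ∉ M)) := by
        intro hac hacM
        have := hbip a c hac
        revert this hacM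
        cases side a <;> cases side c <;> cases b <;> simp <;> tauto
      simp only [AltStep, List.head?_cons, Option.mem_def, Option.some.injEq, forall_eq']
      constructor
      · rintro ⟨⟨hac, hacM⟩, hadj, halt, hcd⟩
        exact ⟨⟨hac, hadj⟩, ⟨(key hac hacM).1 hcd, halt⟩, hacM⟩
      · rintro ⟨⟨hac, hadj⟩, ⟨hacd, halt⟩, hacM⟩
        exact ⟨⟨hac, hacM⟩, hadj, halt, (key hac hacM).2 hacd⟩

theorem isAltPath_cons_iff (hbip : IsBipartiteWith G side) {u v : V} {l : List V}
    (hu : ¬ IsMatchedBy M u) :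
    IsAltPath G M u v (u :: l) ↔
      (u :: l).IsChain (AltStep G M side (side u)) ∧ (u :: l).Nodup ∧
        (u :: l).getLast? = some v := by
  have hfirst : ∀ c ∈ l.head?, (s(u, c) ∈ M ↔ side u ≠ side u) :=
    fun c _ => iff_of_false (fun h => hu ⟨_, h, Sym2.mem_mk_left _ _⟩) (not_not_intro rfl)
  rw [isChain_altStep_cons_iff hbip]
  exact ⟨fun ⟨hadj, hnodup, halt, _, hlast⟩ => ⟨⟨hadj, halt, hfirst⟩, hnodup, hlast⟩,
    fun ⟨⟨hadj, halt, _⟩, hnodup, hlast⟩ => ⟨hadj, hnodup, halt, rfl, hlast⟩⟩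

theorem IsAltPath.even_length_iff (hbip : IsBipartiteWith G side) {u v : V} {p : List V}
    (hp : IsAltPath G M u v p) : Even (pathEdges p).length ↔ side v = side u := by
  obtain ⟨hadj, -, -, hhead, hlast⟩ := hp
  obtain ⟨l, rfl⟩ := List.head?_eq_some_iff.1 hhead
  rw [length_pathEdges_cons, hbip.side_eq_iff_even hadj hlast]

theorem exists_isAltPath_iff (hbip : IsBipartiteWith G side) {u v : V} (hu : ¬ IsMatchedBy M u) :
    (∃ p, IsAltPath G M u v p) ↔ Relation.ReflTransGen (AltStep G M side (side u)) u v := by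
  constructor
  · rintro ⟨p, hp⟩
    obtain ⟨l, rfl⟩ := List.head?_eq_some_iff.1 hp.2.2.2.1
    obtain ⟨hchain, -, hlast⟩ := (isAltPath_cons_iff hbip hu).1 hp
    exact List.relationReflTransGen_of_exists_isChain_cons l hchain
      (List.getLast_of_getLast?_eq_some hlast)
  · intro h
    obtain ⟨l, hchain, hnodup, hlast⟩ := h.exists_nodup_isChain
    exact ⟨u :: l, (isAltPath_cons_iff hbip hu).2 ⟨hchain, hnodup, hlast⟩⟩

theorem evenVtx_iff_altReachable (hbip : IsBipartiteWith G side) {v : V} :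
    EvenVtx G M v ↔ AltReachable G M side (side v) v := by
  constructor
  · rintro ⟨u, p, hu, hp, heven⟩
    have hside : side u = side v := ((hp.even_length_iff hbip).1 heven).symm
    exact ⟨u, hu, hside, hside ▸ (exists_isAltPath_iff hbip hu).1 ⟨p, hp⟩⟩
  · rintro ⟨u, hu, hside, h⟩
    obtain ⟨p, hp⟩ := (exists_isAltPath_iff hbip hu).2 (hside ▸ h)
    exact ⟨u, p, hu, hp, (hp.even_length_iff hbip).2 hside.symm⟩

theorem oddVtx_iff_altReachable (hbip : IsBipartiteWith G side) {v : V} :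
    OddVtx G M v ↔ AltReachable G M side (!side v) v := by
  constructor
  · rintro ⟨u, p, hu, hp, hodd⟩
    have hside : side u = !side v := by
      rw [Bool.eq_not_iff, ne_comm, Ne, ← hp.even_length_iff hbip, Nat.not_even_iff_odd]
      exact hodd
    exact ⟨u, hu, hside, hside ▸ (exists_isAltPath_iff hbip hu).1 ⟨p, hp⟩⟩
  · rintro ⟨u, hu, hside, h⟩
    obtain ⟨p, hp⟩ := (exists_isAltPath_iff hbip hu).2 (hside ▸ h)
    refine ⟨u, p, hu, hp, ?_⟩
    rw [← Nat.not_even_iff_odd, hp.even_length_iff hbip, hside]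
    simp

theorem evenVtx_of_not_isMatchedBy {v : V} (hv : ¬ IsMatchedBy M v) : EvenVtx G M v :=
  ⟨v, [v], hv, ⟨.singleton v, List.nodup_singleton v, .nil, rfl, rfl⟩, by simp [pathEdges]⟩

theorem unreachableVtx_iff {v : V} :
    UnreachableVtx G M v ↔ ¬ EvenVtx G M v ∧ ¬ OddVtx G M v := by
  constructor
  · intro h
    exact ⟨fun ⟨u, p, hu, hp, _⟩ => h ⟨u, p, hu, hp⟩,
      fun ⟨u, p, hu, hp, _⟩ => h ⟨u, p, hu, hp⟩⟩
  · rintro ⟨heven, hodd⟩ ⟨u, p, hu, hp⟩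
    rcases Nat.even_or_odd (pathEdges p).length with h | h
    exacts [heven ⟨u, p, hu, hp, h⟩, hodd ⟨u, p, hu, hp, h⟩]

theorem UnreachableVtx.isMatchedBy {v : V} (hv : UnreachableVtx G M v) : IsMatchedBy M v :=
  not_not.1 fun h => (unreachableVtx_iff.1 hv).1 (evenVtx_of_not_isMatchedBy h)

theorem EvenVtx.oddVtx_of_adj (hbip : IsBipartiteWith G side) (hM : IsMatchingIn G M) {v w : V}
    (hv : EvenVtx G M v) (hvw : G.Adj v w) : OddVtx G M w := by
  obtain ⟨u, hu, hside, h⟩ := (evenVtx_iff_altReachable hbip).1 hv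
  rw [oddVtx_iff_altReachable hbip, ← hbip.side_eq_not hvw.symm]
  refine ⟨u, hu, hside, ?_⟩
  by_cases hvwM : s(v, w) ∈ M
  · -- the walk enters `v` through its matching edge, which can only be `s(v, w)`
    rcases h.cases_tail with rfl | ⟨y, hy, hyv⟩
    · exact absurd ⟨_, hvwM, Sym2.mem_mk_left _ _⟩ hu
    · have hyvM : s(y, v) ∈ M := hyv.2.2 (hbip y v hyv.1)
      rcases Sym2.eq_iff.1 (hM.eq_of_mem hyvM hvwM (Sym2.mem_mk_right _ _) (Sym2.mem_mk_left _ _))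
        with ⟨rfl, -⟩ | ⟨rfl, -⟩
      · exact absurd rfl hyv.1.ne
      · exact hy
  · exact h.tail ⟨hvw, iff_of_false hvwM (not_not_intro rfl)⟩

theorem OddVtx.evenVtx_of_mem (hbip : IsBipartiteWith G side) (hM : IsMatchingIn G M) {v w : V}
    (hv : OddVtx G M v) (hvw : s(v, w) ∈ M) : EvenVtx G M w := by
  obtain ⟨u, hu, hside, h⟩ := (oddVtx_iff_altReachable hbip).1 hv
  rw [evenVtx_iff_altReachable hbip, hbip.side_eq_not (hM.1 hvw)]
  exact ⟨u, hu, hside, h.tail ⟨hM.1 hvw, iff_of_true hvw (by simp)⟩⟩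

end Alternating

section Augmenting

variable {G : SimpleGraph V} {side : V → Bool}

theorem mem_of_altStep_of_altStep (hbip : IsBipartiteWith G side) {M : Set (Sym2 V)} {b : Bool}
    {x y z : V} (hx : ¬ IsMatchedBy M x) (hxy : AltStep G M side b x y)
    (hyz : AltStep G M side b y z) : s(y, z) ∈ M := by
  have hxb : side x = b := not_not.1 fun h => hx ⟨_, hxy.2.2 h, Sym2.mem_mk_left _ _⟩
  exact hyz.2.2 (hxb ▸ hbip y x hxy.1.symm)

theorem exists_ncard_eq_add_one_of_isChain_altStep [Finite V] (hbip : IsBipartiteWith G side)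
    {b : Bool} {w : V} :
    ∀ {M : Set (Sym2 V)} {x y : V} {l : List V}, IsMatchingIn G M → ¬ IsMatchedBy M x →
      ¬ IsMatchedBy M w → (x :: y :: l).IsChain (AltStep G M side b) → (x :: y :: l).Nodup →
      (x :: y :: l).getLast? = some w → ∃ M', IsMatchingIn G M' ∧ M'.ncard = M.ncard + 1
  | M, x, y, [], hM, hx, hw, hchain, _, hlast => by
    obtain rfl : y = w := by simpa using hlast
    exact ⟨_, hM.insert_of_not_isMatchedBy (List.isChain_cons_cons.1 hchain).1.1 hx hw,
      Set.ncard_insert_of_notMem fun h => hx ⟨_, h, Sym2.mem_mk_left _ _⟩⟩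
  | M, x, y, [z], hM, hx, hw, hchain, _, hlast => by
    obtain rfl : z = w := by simpa using hlast
    simp only [List.isChain_cons_cons] at hchain
    have hyzM := mem_of_altStep_of_altStep hbip hx hchain.1 hchain.2.1
    exact (hw ⟨_, hyzM, Sym2.mem_mk_right _ _⟩).elim
  | M, x, y, z :: a :: l, hM, hx, hw, hchain, hnodup, hlast => by
    -- flip the first two edges of the path; `z` becomes the unmatched start of the rest
    rw [List.isChain_cons_cons, List.isChain_cons_cons] at hchain
    obtain ⟨hxy, hyz, hrest⟩ := hchain
    rw [List.nodup_cons, List.nodup_cons, List.mem_cons, not_or] at hnodup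
    obtain ⟨⟨-, hxl⟩, hyl, hnodup⟩ := hnodup
    have hyzM := mem_of_altStep_of_altStep hbip hx hxy hyz
    obtain ⟨hM₁, hcard⟩ := hM.exchange hxy.1 hx hyzM
    have hoff : ∀ p ∈ z :: a :: l, p ≠ x ∧ p ≠ y :=
      fun p hp => ⟨fun h => hxl (h ▸ hp), fun h => hyl (h ▸ hp)⟩
    have hchain₁ : (z :: a :: l).IsChain (AltStep G (insert s(x, y) (M \ {s(y, z)})) side b) :=
      hrest.imp_of_mem_imp fun p q hp hq hpq =>
        ⟨hpq.1, (mem_exchange_iff (hoff p hp) (hoff q hq)).trans hpq.2⟩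
    have hlast' : (z :: a :: l).getLast? = some w := by simpa using hlast
    have hw' := hoff w (List.mem_of_getLast? hlast')
    obtain ⟨M', hM', hcard'⟩ := exists_ncard_eq_add_one_of_isChain_altStep hbip hM₁
      (fun h => ((hM.isMatchedBy_exchange_iff hyzM (hoff z List.mem_cons_self)).1 h).2 rfl)
      (fun h => hw ((hM.isMatchedBy_exchange_iff hyzM hw').1 h).1) hchain₁ hnodup hlast'
    exact ⟨M', hM', hcard' ▸ hcard ▸ rfl⟩

end Augmenting

section MaxMatching

variable [Finite V] {G : SimpleGraph V} {M : Set (Sym2 V)} {side : V → Bool}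

theorem IsMaxMatching.not_reflTransGen_altStep (hbip : IsBipartiteWith G side)
    (hM : IsMaxMatching G M) {b : Bool} {u w : V} (hu : ¬ IsMatchedBy M u)
    (hw : ¬ IsMatchedBy M w) (huw : u ≠ w) :
    ¬ Relation.ReflTransGen (AltStep G M side b) u w := by
  intro h
  obtain ⟨l, hchain, hnodup, hlast⟩ := h.exists_nodup_isChain
  cases l with
  | nil => exact huw (by simpa using hlast)
  | cons y l =>
    obtain ⟨M', hM', hcard⟩ :=
      exists_ncard_eq_add_one_of_isChain_altStep hbip hM.1 hu hw hchain hnodup hlast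
    have := hM.2 M' hM'
    omega

theorem EvenVtx.not_oddVtx (hbip : IsBipartiteWith G side) (hM : IsMaxMatching G M) {v : V}
    (he : EvenVtx G M v) : ¬ OddVtx G M v := by
  obtain ⟨u₁, hu₁, hside₁, h₁⟩ := (evenVtx_iff_altReachable hbip).1 he
  rintro ho
  obtain ⟨u₂, hu₂, hside₂, h₂⟩ := (oddVtx_iff_altReachable hbip).1 ho
  -- walking back along the odd walk to `v` continues the even walk from `u₁` to `u₂`
  rw [altStep_not hbip, Relation.reflTransGen_swap] at h₂
  refine hM.not_reflTransGen_altStep hbip hu₁ hu₂ ?_ (h₁.trans h₂)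
  rintro rfl
  simp_all

theorem OddVtx.isMatchedBy (hbip : IsBipartiteWith G side) (hM : IsMaxMatching G M) {v : V}
    (hv : OddVtx G M v) : IsMatchedBy M v :=
  not_not.1 fun h => (evenVtx_of_not_isMatchedBy h).not_oddVtx hbip hM hv

end MaxMatching

/-- König's minimum vertex cover, for either choice of the side `b`. -/
def koenigCover (G : SimpleGraph V) (M : Set (Sym2 V)) (side : V → Bool) (b : Bool) : Set V :=
  {x | OddVtx G M x ∨ (UnreachableVtx G M x ∧ side x = b)}

section KoenigCover

variable {G : SimpleGraph V} {M : Set (Sym2 V)} {side : V → Bool}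

theorem mem_koenigCover_or_of_adj (hbip : IsBipartiteWith G side) (hM : IsMatchingIn G M)
    (b : Bool) {x y : V} (hxy : G.Adj x y) :
    x ∈ koenigCover G M side b ∨ y ∈ koenigCover G M side b := by
  have hnot_even : ∀ {x y}, G.Adj x y → ¬ OddVtx G M y → ¬ EvenVtx G M x :=
    fun hxy hy hx => hy (hx.oddVtx_of_adj hbip hM hxy)
  by_cases hx : OddVtx G M x
  · exact Or.inl (Or.inl hx)
  by_cases hy : OddVtx G M y
  · exact Or.inr (Or.inl hy)
  have hux : UnreachableVtx G M x := unreachableVtx_iff.2 ⟨hnot_even hxy hy, hx⟩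
  have huy : UnreachableVtx G M y := unreachableVtx_iff.2 ⟨hnot_even hxy.symm hx, hy⟩
  have hside : side x = b ∨ side y = b := by
    rw [hbip.side_eq_not hxy]
    cases side x <;> cases b <;> simp
  exact hside.imp (fun h => Or.inr ⟨hux, h⟩) (fun h => Or.inr ⟨huy, h⟩)

theorem IsMaxMatching.notMem_koenigCover [Finite V] (hbip : IsBipartiteWith G side)
    (hM : IsMaxMatching G M) (b : Bool) {x y : V} (hxy : s(x, y) ∈ M)
    (hx : x ∈ koenigCover G M side b) : y ∉ koenigCover G M side b := by
  have hodd : ∀ {x y}, s(x, y) ∈ M → OddVtx G M x → y ∉ koenigCover G M side b := by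
    intro x y hxy hx hy
    have hy_even := hx.evenVtx_of_mem hbip hM.1 hxy
    exact hy.elim (hy_even.not_oddVtx hbip hM) fun h => (unreachableVtx_iff.1 h.1).1 hy_even
  intro hy
  rcases hx with hx | ⟨hux, hxb⟩
  · exact hodd hxy hx hy
  rcases hy with hy | ⟨-, hyb⟩
  · exact hodd (Sym2.eq_swap ▸ hxy) hy (Or.inr ⟨hux, hxb⟩)
  · exact hbip x y (hM.1.1 hxy) (hxb.trans hyb.symm)

theorem IsMaxMatching.ncard_koenigCover_le [Finite V] (hbip : IsBipartiteWith G side)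
    (hM : IsMaxMatching G M) (b : Bool) : (koenigCover G M side b).ncard ≤ M.ncard :=
  ncard_le_ncard_of_forall_isMatchedBy
    (fun _ hx => hx.elim (·.isMatchedBy hbip hM) (·.1.isMatchedBy))
    fun _ _ hxy hx => hM.notMem_koenigCover hbip b hxy hx

end KoenigCover

/-- No maximum matching of `G` contains an edge with one endpoint odd
and the other endpoint odd or unreachable (labels taken with respect to a fixed
maximum matching `M`). -/
theorem no_max_matching_edge_odd_oddUnreachable [Fintype V]
    (G : SimpleGraph V) (side : V → Bool) (hbip : IsBipartiteWith G side)
    (M : Set (Sym2 V)) (hM : IsMaxMatching G M)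
    (N : Set (Sym2 V)) (hN : IsMaxMatching G N) :
    ∀ v w, s(v, w) ∈ N → OddVtx G M v →
      ¬ (OddVtx G M w ∨ UnreachableVtx G M w) := by
  intro v w hvw hv hw
  have hlt := hN.1.ncard_lt_ncard_of_cover
    (fun _ _ => mem_koenigCover_or_of_adj hbip hM.1 (side w)) hvw
    (Or.inl hv) (hw.imp id fun h => ⟨h, rfl⟩)
  have hle := hM.ncard_koenigCover_le hbip (side w)
  have hge := hN.2 M hM.1
  omega
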